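/- Conditional exponential decay along the gradient flow: let φ_1, …, φ_K ∈ C¹(ℝ), fix c ∈ ℝ^N and ω ∈ ℝ^K, and let Θ(t) = ({v_i(t)}, α(t)) solve the gradient flow of the square loss for the two-layer KNN on [0, T], training only {v_i} and α. For each t, let A(t) be the K×m matrix with entries A_{kj}(t) = Σ_{i=1}^N c_i φ_k(ω_k v_i(t)ᵀ x̃_j). If there is μ > 0 such that σ_min(A(t)) ≥ μ for all t ∈ [0, T] (K ≥ m, σ_min the m-th largest singular value), then L(t) ≤ L(0) e^{−2μ² t} for all t ∈ [0, T]. -/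

import Mathlib

/-!
Along the flow, `d/dt L(Θ t) = -‖∇L(Θ t)‖²`. The network is linear in `α`, and the `α`-part of the
gradient is `A r`, where `r_j = u(x_j) - y_j` is the residual, so
`‖∇L‖² ≥ ‖A r‖² ≥ μ² ‖r‖² = 2 μ² L`. Grönwall's inequality for `L' ≤ -2 μ² L` gives the decay.
-/

open scoped BigOperators

noncomputable section

/-- Euclidean norm of a finitely-indexed real vector. -/
def euclNorm {ι : Type*} [Fintype ι] (u : ι → ℝ) : ℝ := Real.sqrt (∑ i, (u i) ^ 2)

/-- For a `K × m` real matrix with `K ≥ m`, the `m`-th largest (i.e. least) singular value,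
characterized as the infimum of `‖A x‖` over Euclidean unit vectors `x ∈ ℝ^m`. -/
def sigmaMin {K m : ℕ} (A : Matrix (Fin K) (Fin m) ℝ) : ℝ :=
  ⨅ x : {x : Fin m → ℝ // euclNorm x = 1}, euclNorm (A.mulVec x)

/-- The trained parameters `Θ = (V, α)` (the weights `v_i ∈ ℝ^{d+1}` and the coefficients
`α ∈ ℝ^K`), as a Euclidean (inner-product) space; `c` and `ω` are held fixed. -/
abbrev VAParams (N d K : ℕ) : Type :=
  EuclideanSpace ℝ ((Fin N × Fin (d + 1)) ⊕ Fin K)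

/-- The two-layer Kronecker network `u^K(x) = Σ_i c_i Σ_k α_k φ_k(ω_k v_iᵀ x̃)` as a function
of the trained parameters `θ = (V, α)`, with `c` and `ω` fixed. -/
def uKVA {N d K : ℕ} (φ : Fin K → ℝ → ℝ) (c : Fin N → ℝ) (ω : Fin K → ℝ)
    (θ : VAParams N d K) (x : Fin (d + 1) → ℝ) : ℝ :=
  ∑ i, c i * ∑ k, θ (Sum.inr k) * φ k (ω k * ∑ j, θ (Sum.inl (i, j)) * x j)

/-- The square loss `L(θ) = ½ Σ_j (u^K(x_j; θ) − y_j)²`. -/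
def sqLossVA {N d K m : ℕ} (φ : Fin K → ℝ → ℝ) (c : Fin N → ℝ) (ω : Fin K → ℝ)
    (xt : Fin m → Fin (d + 1) → ℝ) (y : Fin m → ℝ) (θ : VAParams N d K) : ℝ :=
  (1 / 2 : ℝ) * ∑ j, (uKVA φ c ω θ (xt j) - y j) ^ 2

open Set

section EuclNorm

variable {ι : Type*} [Fintype ι]

lemma euclNorm_nonneg (u : ι → ℝ) : 0 ≤ euclNorm u :=
  Real.sqrt_nonneg _

lemma euclNorm_sq (u : ι → ℝ) : euclNorm u ^ 2 = ∑ i, u i ^ 2 :=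
  Real.sq_sqrt (by positivity)

lemma euclNorm_smul (a : ℝ) (u : ι → ℝ) :
    euclNorm (a • u) = |a| * euclNorm u := by
  have : ∑ i, ((a • u) i) ^ 2 = a ^ 2 * ∑ i, (u i) ^ 2 := by
    rw [Finset.mul_sum]
    exact Finset.sum_congr rfl fun i _ => by simp only [Pi.smul_apply, smul_eq_mul]; ring
  rw [euclNorm, euclNorm, this, Real.sqrt_mul (sq_nonneg a), Real.sqrt_sq_eq_abs]

end EuclNorm

lemma mul_euclNorm_le_euclNorm_mulVec {K m : ℕ} {A : Matrix (Fin K) (Fin m) ℝ} {μ : ℝ}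
    (h : μ ≤ sigmaMin A) (r : Fin m → ℝ) : μ * euclNorm r ≤ euclNorm (A.mulVec r) := by
  rcases (euclNorm_nonneg r).eq_or_lt with h0 | h0
  · rw [← h0, mul_zero]
    exact euclNorm_nonneg _
  have hunit : euclNorm ((euclNorm r)⁻¹ • r) = 1 := by
    rw [euclNorm_smul, abs_of_pos (inv_pos.mpr h0), inv_mul_cancel₀ h0.ne']
  have hbdd : BddBelow (range fun x : {x : Fin m → ℝ // euclNorm x = 1} =>
      euclNorm (A.mulVec x)) := ⟨0, by rintro _ ⟨x, rfl⟩; exact euclNorm_nonneg _⟩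
  have hle : μ ≤ (euclNorm r)⁻¹ * euclNorm (A.mulVec r) := by
    calc μ ≤ sigmaMin A := h
      _ ≤ euclNorm (A.mulVec ((euclNorm r)⁻¹ • r)) := ciInf_le hbdd ⟨_, hunit⟩
      _ = (euclNorm r)⁻¹ * euclNorm (A.mulVec r) := by
        rw [A.mulVec_smul, euclNorm_smul, abs_of_pos (inv_pos.mpr h0)]
  rwa [le_inv_mul_iff₀ h0, mul_comm] at hle

lemma gradient_apply_eq_fderiv_single {ι : Type*} [Fintype ι] [DecidableEq ι]
    (f : EuclideanSpace ℝ ι → ℝ) (x : EuclideanSpace ℝ ι) (i : ι) :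
    gradient f x i = fderiv ℝ f x (EuclideanSpace.single i 1) := by
  rw [← inner_gradient_left, EuclideanSpace.inner_single_right]
  simp

lemma hasDerivAt_comp_of_hasDerivAt_neg_gradient {E : Type*} [NormedAddCommGroup E]
    [InnerProductSpace ℝ E] [CompleteSpace E] {f : E → ℝ} {γ : ℝ → E} {t : ℝ}
    (hf : DifferentiableAt ℝ f (γ t)) (hγ : HasDerivAt γ (-gradient f (γ t)) t) :
    HasDerivAt (fun s => f (γ s)) (-‖gradient f (γ t)‖ ^ 2) t := by
  have h := hf.hasGradientAt.hasFDerivAt.comp_hasDerivAt t hγ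
  rwa [InnerProductSpace.toDual_apply_apply, inner_neg_right, real_inner_self_eq_norm_sq] at h

lemma le_mul_exp_of_hasDerivAt_le_mul_self {f f' : ℝ → ℝ} {κ a b : ℝ}
    (hf : ∀ t ∈ Icc a b, HasDerivAt f (f' t) t) (hbound : ∀ t ∈ Icc a b, f' t ≤ κ * f t) :
    ∀ t ∈ Icc a b, f t ≤ f a * Real.exp (κ * (t - a)) := by
  intro t ht
  rw [← gronwallBound_ε0]
  refine le_gronwallBound_of_liminf_deriv_right_le
    (fun s hs => (hf s hs).continuousAt.continuousWithinAt)
    (fun s hs _ hr => (hf s (Ico_subset_Icc_self hs)).hasDerivWithinAt.liminf_right_slope_le hr)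
    le_rfl (fun s hs => by simpa using hbound s (Ico_subset_Icc_self hs)) t ht

section KroneckerNetwork

variable {N d K m : ℕ} (φ : Fin K → ℝ → ℝ) (c : Fin N → ℝ) (ω : Fin K → ℝ)
  (xt : Fin m → Fin (d + 1) → ℝ) (y : Fin m → ℝ)

/-- The paper's matrix `A(t)`, at `θ = Θ t`. -/
def featureMatrix (θ : VAParams N d K) : Matrix (Fin K) (Fin m) ℝ :=
  Matrix.of fun k j => ∑ i, c i * φ k (ω k * ∑ l, θ (Sum.inl (i, l)) * xt j l)

variable {φ}

@[fun_prop]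
lemma differentiable_uKVA (hφ : ∀ k, Differentiable ℝ (φ k)) (x : Fin (d + 1) → ℝ) :
    Differentiable ℝ (fun θ : VAParams N d K => uKVA φ c ω θ x) := by
  unfold uKVA
  fun_prop

lemma differentiable_sqLossVA (hφ : ∀ k, Differentiable ℝ (φ k)) :
    Differentiable ℝ (sqLossVA φ c ω xt y : VAParams N d K → ℝ) := by
  unfold sqLossVA
  fun_prop

lemma uKVA_add_smul_single_inr (θ : VAParams N d K) (k : Fin K) (s : ℝ) (j : Fin m) :
    uKVA φ c ω (θ + s • EuclideanSpace.single (Sum.inr k) 1) (xt j)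
      = uKVA φ c ω θ (xt j) + s * featureMatrix φ c ω xt θ k j := by
  have happ : ∀ q, (θ + s • EuclideanSpace.single (Sum.inr k) 1 : VAParams N d K) q
      = θ q + if q = Sum.inr k then s else 0 := by
    intro q
    simp
  simp only [uKVA, featureMatrix, Matrix.of_apply, happ, reduceCtorEq, if_false, add_zero,
    Sum.inr.injEq, add_mul, ite_mul, zero_mul, Finset.sum_add_distrib, mul_add,
    Finset.sum_ite_eq', Finset.mem_univ, if_true, Finset.mul_sum]
  exact congrArg _ (Finset.sum_congr rfl fun i _ => by ring)

lemma gradient_sqLossVA_inr (hφ : ∀ k, Differentiable ℝ (φ k)) (θ : VAParams N d K) (k : Fin K) :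
    gradient (sqLossVA φ c ω xt y) θ (Sum.inr k)
      = (featureMatrix φ c ω xt θ).mulVec (fun j => uKVA φ c ω θ (xt j) - y j) k := by
  set A := featureMatrix φ c ω xt θ
  set r : Fin m → ℝ := fun j => uKVA φ c ω θ (xt j) - y j
  have hline : HasLineDerivAt ℝ (sqLossVA φ c ω xt y) (A.mulVec r k) θ
      (EuclideanSpace.single (Sum.inr k) 1) := by
    have hquad : HasDerivAt (fun s : ℝ => (1 / 2 : ℝ) * ∑ j, (r j + s * A k j) ^ 2)
        ((1 / 2 : ℝ) * ∑ j, (2 : ℕ) * (r j + 0 * A k j) ^ (2 - 1) * (1 * A k j)) 0 :=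
      .const_mul _ <| .fun_sum fun j _ =>
        (((hasDerivAt_id (0 : ℝ)).mul_const (A k j)).const_add (r j)).fun_pow 2
    have hfun : (fun s : ℝ => sqLossVA φ c ω xt y (θ + s • EuclideanSpace.single (Sum.inr k) 1))
        = fun s => (1 / 2 : ℝ) * ∑ j, (r j + s * A k j) ^ 2 := by
      funext s
      simp only [sqLossVA, uKVA_add_smul_single_inr, r]
      exact congrArg _ (Finset.sum_congr rfl fun j _ => by ring)
    unfold HasLineDerivAt
    rw [hfun]
    refine hquad.congr_deriv ?_
    simp only [Matrix.mulVec, dotProduct, Finset.mul_sum]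
    exact Finset.sum_congr rfl fun j _ => by push_cast; ring
  rw [gradient_apply_eq_fderiv_single,
    ← (differentiable_sqLossVA c ω xt y hφ θ).lineDeriv_eq_fderiv, hline.lineDeriv]

lemma two_mul_sq_mul_sqLossVA_le_norm_gradient_sq (hφ : ∀ k, Differentiable ℝ (φ k)) {μ : ℝ}
    (hμ : 0 ≤ μ) (θ : VAParams N d K) (hA : μ ≤ sigmaMin (featureMatrix φ c ω xt θ)) :
    2 * μ ^ 2 * sqLossVA φ c ω xt y θ ≤ ‖gradient (sqLossVA φ c ω xt y) θ‖ ^ 2 := by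
  set g := gradient (sqLossVA φ c ω xt y) θ
  set r : Fin m → ℝ := fun j => uKVA φ c ω θ (xt j) - y j
  calc 2 * μ ^ 2 * sqLossVA φ c ω xt y θ = (μ * euclNorm r) ^ 2 := by
        rw [mul_pow, euclNorm_sq, sqLossVA]
        ring
    _ ≤ euclNorm ((featureMatrix φ c ω xt θ).mulVec r) ^ 2 :=
        pow_le_pow_left₀ (mul_nonneg hμ (euclNorm_nonneg r))
          (mul_euclNorm_le_euclNorm_mulVec hA r) 2
    _ = ∑ k, g (Sum.inr k) ^ 2 := by
        simp only [euclNorm_sq, g, gradient_sqLossVA_inr c ω xt y hφ, r]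
    _ ≤ ∑ p, g (Sum.inl p) ^ 2 + ∑ k, g (Sum.inr k) ^ 2 :=
        le_add_of_nonneg_left (by positivity)
    _ = ‖g‖ ^ 2 := by rw [EuclideanSpace.real_norm_sq_eq, Fintype.sum_sum_type]

end KroneckerNetwork

theorem conditional_exponential_decay_general {N d K m : ℕ}
    (φ : Fin K → ℝ → ℝ) (hφ : ∀ k, ContDiff ℝ 1 (φ k))
    (c : Fin N → ℝ) (ω : Fin K → ℝ)
    (xt : Fin m → Fin (d + 1) → ℝ) (y : Fin m → ℝ)
    (T μ : ℝ) (hμ : 0 < μ)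
    (Θ : ℝ → VAParams N d K)
    (hflow : ∀ t ∈ Set.Icc (0 : ℝ) T,
      HasDerivAt Θ (-(gradient (sqLossVA φ c ω xt y) (Θ t))) t)
    (hsv : ∀ t ∈ Set.Icc (0 : ℝ) T,
      μ ≤ sigmaMin (Matrix.of fun (k : Fin K) (j : Fin m) =>
        ∑ i, c i * φ k (ω k * ∑ l, Θ t (Sum.inl (i, l)) * xt j l))) :
    ∀ t ∈ Set.Icc (0 : ℝ) T,
      sqLossVA φ c ω xt y (Θ t) ≤
        sqLossVA φ c ω xt y (Θ 0) * Real.exp (-2 * μ ^ 2 * t) := by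
  have hφ' : ∀ k, Differentiable ℝ (φ k) := fun k => (hφ k).differentiable one_ne_zero
  have hL := differentiable_sqLossVA c ω xt y hφ'
  have hdecay := le_mul_exp_of_hasDerivAt_le_mul_self (κ := -2 * μ ^ 2)
    (fun s hs => hasDerivAt_comp_of_hasDerivAt_neg_gradient (hL _) (hflow s hs))
    (fun s hs => by
      have := two_mul_sq_mul_sqLossVA_le_norm_gradient_sq c ω xt y hφ' hμ.le (Θ s) (hsv s hs)
      linarith)
  simpa only [sub_zero] using hdecay

/-- conditional exponential decay along the gradient flow.  If
`Θ(t) = (V(t), α(t))` solves the gradient flow of the square loss on `[0, T]` (training only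
`V` and `α`) and the matrix `A(t)_{kj} = Σ_i c_i φ_k(ω_k v_i(t)ᵀ x̃_j)` satisfies
`σ_min(A(t)) ≥ μ > 0` on `[0, T]`, then `L(t) ≤ L(0) e^{−2μ²t}` on `[0, T]`. -/
theorem conditional_exponential_decay {N d K m : ℕ} (hKm : m ≤ K)
    (φ : Fin K → ℝ → ℝ) (hφ : ∀ k, ContDiff ℝ 1 (φ k))
    (c : Fin N → ℝ) (ω : Fin K → ℝ)
    (xt : Fin m → Fin (d + 1) → ℝ) (y : Fin m → ℝ)
    (T μ : ℝ) (hμ : 0 < μ)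
    (Θ : ℝ → VAParams N d K)
    (hflow : ∀ t ∈ Set.Icc (0 : ℝ) T,
      HasDerivAt Θ (-(gradient (sqLossVA φ c ω xt y) (Θ t))) t)
    (hsv : ∀ t ∈ Set.Icc (0 : ℝ) T,
      μ ≤ sigmaMin (Matrix.of fun (k : Fin K) (j : Fin m) =>
        ∑ i, c i * φ k (ω k * ∑ l, Θ t (Sum.inl (i, l)) * xt j l))) :
    ∀ t ∈ Set.Icc (0 : ℝ) T,
      sqLossVA φ c ω xt y (Θ t) ≤
        sqLossVA φ c ω xt y (Θ 0) * Real.exp (-2 * μ ^ 2 * t) :=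
  conditional_exponential_decay_general φ hφ c ω xt y T μ hμ Θ hflow hsv
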